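/- arXiv:1208.6203 — 2 statements merged into one kernel-verified Lean document; each statement's English description precedes it below -/
import Mathlib

section
/- Let G be a connected graph 2-cell embedded in a surface of Euler characteristic χ with girth g, and suppose no two faces of degree g share a vertex (no intersecting g-faces). Then ad(G) ≤ 2 + (4g+2)/(g²−g) − 2(1 + 2/(g−1))·χ/|G|. -/
/-!
Every face of degree `d ≥ g` has `g + 1 ≤ d + [d = g]`; summing over the faces,
`(g + 1) f ≤ 2‖G‖ + f_g ≤ 2‖G‖ + |G| / g`. Eliminating `f` with Euler's formula gives
`(g - 1)‖G‖ ≤ (g + 1)(|G| - χ) + |G| / g`, which is the bound after dividing by `(g - 1)|G| / 2`.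
-/

open Finset

theorem succ_mul_card_le_sum_add_card_filter {F : Type*} [Fintype F] (deg : F → ℕ) {g : ℕ}
    (hdeg : ∀ x, g ≤ deg x) :
    (g + 1) * Fintype.card F ≤ ∑ x, deg x + #{x | deg x = g} := by
  rw [card_filter, ← sum_add_distrib, ← card_univ, mul_comm, ← smul_eq_mul, ← sum_const]
  refine sum_le_sum fun x _ => ?_
  have := hdeg x
  split_ifs <;> omega

theorem sub_one_mul_le_of_face_count {g n m f fg χ : ℝ} (hg : 0 < g)
    (hfaces : (g + 1) * f ≤ 2 * m + fg) (hvert : g * fg ≤ n) (euler : n - m + f = χ) :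
    (g - 1) * m ≤ (g + 1) * (n - χ) + n / g := by
  have hfg : fg ≤ n / g := (le_div_iff₀' hg).2 hvert
  linear_combination hfaces + hfg - (g + 1) * euler

theorem two_mul_div_le_of_sub_one_mul_le {g n m χ : ℝ} (hg : 1 < g) (hn : 0 < n)
    (h : (g - 1) * m ≤ (g + 1) * (n - χ) + n / g) :
    2 * m / n ≤ 2 + (4 * g + 2) / (g ^ 2 - g) - 2 * (1 + 2 / (g - 1)) * (χ / n) := by
  have hg1 : 0 < g - 1 := sub_pos.2 hg
  have hrhs : (2 + (4 * g + 2) / (g ^ 2 - g) - 2 * (1 + 2 / (g - 1)) * (χ / n)) * n =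
      2 * ((g + 1) * (n - χ) + n / g) / (g - 1) := by
    have : g ^ 2 - g ≠ 0 := by nlinarith
    field_simp
    ring
  rw [div_le_iff₀ hn, hrhs, le_div_iff₀ hg1]
  linarith

theorem avg_degree_bound_no_intersecting_general {V : Type*} [Fintype V]
    (G : SimpleGraph V) [DecidableRel G.Adj]
    (hconn : G.Connected) (g : ℕ) (hg : 3 ≤ g)
    {F : Type*} [Fintype F] (deg : F → ℕ) (χ : ℤ)
    (hdeg : ∀ x : F, g ≤ deg x)
    (hsum : ∑ x : F, deg x = 2 * G.edgeFinset.card)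
    (euler : (Fintype.card V : ℤ) - G.edgeFinset.card + Fintype.card F = χ)
    (hvert : g * (Finset.univ.filter (fun x : F => deg x = g)).card ≤ Fintype.card V) :
    (2 * G.edgeFinset.card : ℝ) / Fintype.card V ≤
      2 + (4 * g + 2) / ((g : ℝ) ^ 2 - g) -
        2 * (1 + 2 / ((g : ℝ) - 1)) * ((χ : ℝ) / Fintype.card V) := by
  have hn : (0 : ℝ) < Fintype.card V := by
    exact_mod_cast Fintype.card_pos_iff.mpr hconn.nonempty
  have hfaces := succ_mul_card_le_sum_add_card_filter deg hdeg
  rw [hsum] at hfaces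
  have hg' : (3 : ℝ) ≤ g := by exact_mod_cast hg
  refine two_mul_div_le_of_sub_one_mul_le (by linarith) hn ?_
  exact sub_one_mul_le_of_face_count (f := Fintype.card F) (fg := #{x | deg x = g})
    (by linarith) (by exact_mod_cast hfaces) (by exact_mod_cast hvert) (by exact_mod_cast euler)

/-- Lemma 2(ii): as in Lemma 2(i), but additionally no two `g`-faces share a vertex,
which is encoded by `g · f_g ≤ |G|` where `f_g` is the number of faces of degree `g`. -/
theorem avg_degree_bound_no_intersecting {V : Type*} [Fintype V]
    (G : SimpleGraph V) [DecidableRel G.Adj]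
    (hconn : G.Connected) (g : ℕ) (hg : 3 ≤ g) (hgirth : G.girth = g)
    {F : Type*} [Fintype F] (deg : F → ℕ) (χ : ℤ)
    (hdeg : ∀ x : F, g ≤ deg x)
    (hsum : ∑ x : F, deg x = 2 * G.edgeFinset.card)
    (euler : (Fintype.card V : ℤ) - G.edgeFinset.card + Fintype.card F = χ)
    (hvert : g * (Finset.univ.filter (fun x : F => deg x = g)).card ≤ Fintype.card V) :
    (2 * G.edgeFinset.card : ℝ) / Fintype.card V ≤
      2 + (4 * g + 2) / ((g : ℝ) ^ 2 - g) -
        2 * (1 + 2 / ((g : ℝ) - 1)) * ((χ : ℝ) / Fintype.card V) :=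
  avg_degree_bound_no_intersecting_general G hconn g hg deg χ hdeg hsum euler hvert
end

section
/- For reals g ≥ 3, n > 0, χ ≤ 0 with −(n²/8)(1 − 2/g) ≤ χ, and Δ ≥ 7/2 + 6/(g−2), one has 3 + 8/(g−2) − 4χg/(n(g−2)) < Δ + (√(8g(2−g)χ + (3g−2)²) − g + 6)/(2(g−2)). -/
/-!
Put `x = -χ`. Both bounds are affine in `Δ`, and once `Δ` is replaced by its lower bound the
difference `j₂ - s` collapses to `(n √(8g(g-2)x + (3g-2)²) - 8gx) / (2n(g-2))`. The constraint on
`χ` reads `8gx ≤ n²(g-2)`, so for `x ≥ 0` we get `(8gx)² ≤ n² · 8g(g-2)x`, which is strictly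
below `n² (8g(g-2)x + (3g-2)²)`; for `x < 0` the numerator is trivially positive.
-/

theorem lt_mul_sqrt_mul_add {n c a y : ℝ} (hn : 0 < n) (hc : 0 < c) (hy : y ≤ n ^ 2 * a) :
    y < n * √(a * y + c) := by
  rcases lt_or_ge y 0 with hneg | hnonneg
  · exact hneg.trans_le (by positivity)
  · have ha : 0 ≤ a := nonneg_of_mul_nonneg_right (hnonneg.trans hy) (by positivity)
    have hsq : y ^ 2 < (n * √(a * y + c)) ^ 2 := by
      rw [mul_pow, Real.sq_sqrt (by positivity)]
      nlinarith [mul_le_mul_of_nonneg_left hy hnonneg, mul_pos (pow_pos hn 2) hc]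
    exact lt_of_pow_lt_pow_left₀ 2 (by positivity) hsq

theorem neg_sq_div_eight_mul_le_iff {g n χ : ℝ} (hg : 0 < g) :
    -(n ^ 2 / 8) * (1 - 2 / g) ≤ χ ↔ 8 * g * -χ ≤ n ^ 2 * (g - 2) := by
  rw [show -(n ^ 2 / 8) * (1 - 2 / g) = -(n ^ 2 * (g - 2)) / (8 * g) by field_simp,
    div_le_iff₀ (by positivity)]
  constructor <;> intro h <;> linarith

theorem huang_girth_bound_sub_eq {g n χ S : ℝ} (hd : g - 2 ≠ 0) (hn : n ≠ 0) :
    7 / 2 + 6 / (g - 2) + (S - g + 6) / (2 * (g - 2)) -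
        (3 + 8 / (g - 2) - 4 * χ * g / (n * (g - 2))) =
      (n * S - 8 * g * -χ) / (2 * n * (g - 2)) := by
  field_simp
  ring

theorem new_bound_vs_Huang_girth_general (g n χ Δ : ℝ)
    (hg : 3 ≤ g) (hn : 0 < n)
    (hχ : -(n ^ 2 / 8) * (1 - 2 / g) ≤ χ)
    (hΔ : 7 / 2 + 6 / (g - 2) ≤ Δ) :
    3 + 8 / (g - 2) - 4 * χ * g / (n * (g - 2)) <
      Δ + (Real.sqrt (8 * g * (2 - g) * χ + (3 * g - 2) ^ 2) - g + 6) / (2 * (g - 2)) := by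
  have hd : 0 < g - 2 := by linarith
  have key : 8 * g * -χ < n * √(8 * g * (2 - g) * χ + (3 * g - 2) ^ 2) := by
    rw [show 8 * g * (2 - g) * χ = (g - 2) * (8 * g * -χ) by ring]
    exact lt_mul_sqrt_mul_add hn (by nlinarith)
      ((neg_sq_div_eight_mul_le_iff (by linarith)).1 hχ)
  have hgap := huang_girth_bound_sub_eq (χ := χ)
    (S := √(8 * g * (2 - g) * χ + (3 * g - 2) ^ 2)) hd.ne' hn.ne'
  have hgap_pos :
      0 < (n * √(8 * g * (2 - g) * χ + (3 * g - 2) ^ 2) - 8 * g * -χ) / (2 * n * (g - 2)) :=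
    div_pos (by linarith) (by positivity)
  linarith

/-- Remark 2(c): comparison with Huang's girth-dependent bound: `s(χ,g,n) < j₂(Δ,χ,g)`. -/
theorem new_bound_vs_Huang_girth (g n χ Δ : ℝ)
    (hg : 3 ≤ g) (hn : 0 < n) (hχ0 : χ ≤ 0)
    (hχ : -(n ^ 2 / 8) * (1 - 2 / g) ≤ χ)
    (hΔ : 7 / 2 + 6 / (g - 2) ≤ Δ) :
    3 + 8 / (g - 2) - 4 * χ * g / (n * (g - 2)) <
      Δ + (Real.sqrt (8 * g * (2 - g) * χ + (3 * g - 2) ^ 2) - g + 6) / (2 * (g - 2)) :=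
  new_bound_vs_Huang_girth_general g n χ Δ hg hn hχ hΔ
end
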